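/- Let A be a finite-dimensional lozenge algebra, and define the Laplacians Δ = dd* + d*d, Δ_∂ = ∂∂* + ∂*∂, and Δ_∂̄ = ∂̄∂̄* + ∂̄*∂̄, where adjoints are taken with respect to the inner products on A⁰, A¹, A². Then Δ = Δ_∂ + Δ_∂̄ and Δ_∂ = Δ_∂̄; consequently Δ = 2Δ_∂ = 2Δ_∂̄. -/

import Mathlib

/-- A lozenge algebra: a ℤ-graded unital associative ℂ-algebra `A = A⁰ ⊕ A¹ ⊕ A²`
concentrated in degrees 0,1,2 (with `A¹ = A^{1,0} ⊕ A^{0,1}`), equipped with a degree 1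
derivation `d` with `d² = 0`, a central curvature `θ ∈ A²`, a ℂ-antilinear involution
`*`, a trace `τ : A² → ℂ` (extended by `0` to all of `A`), a Kähler element `ω ∈ A²`
with inverse Lefschetz operator `Λ` (extended by `0` on `A⁰ ⊕ A¹`), positive definite
Hermitian forms on each graded piece, and the Yang–Mills condition `d(Λθ) = 0`. -/
structure LozengeAlgebra (A : Type*) [Ring A] [Algebra ℂ A] where
  A0 : Submodule ℂ A
  A10 : Submodule ℂ A
  A01 : Submodule ℂ A
  A2 : Submodule ℂ A
  p0 : A →ₗ[ℂ] A
  p10 : A →ₗ[ℂ] A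
  p01 : A →ₗ[ℂ] A
  p2 : A →ₗ[ℂ] A
  d : A →ₗ[ℂ] A
  Lam : A →ₗ[ℂ] A
  st : A → A
  tau : A →ₗ[ℂ] ℂ
  theta : A
  omega : A
  -- the projections realize the direct sum decomposition A = A⁰ ⊕ A^{1,0} ⊕ A^{0,1} ⊕ A²
  p0_mem : ∀ x : A, p0 x ∈ A0
  p10_mem : ∀ x : A, p10 x ∈ A10
  p01_mem : ∀ x : A, p01 x ∈ A01
  p2_mem : ∀ x : A, p2 x ∈ A2
  decomp : ∀ x : A, p0 x + p10 x + p01 x + p2 x = x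
  proj_eq : ∀ x0 ∈ A0, ∀ x10 ∈ A10, ∀ x01 ∈ A01, ∀ x2 ∈ A2,
    p0 (x0 + x10 + x01 + x2) = x0 ∧ p10 (x0 + x10 + x01 + x2) = x10 ∧
    p01 (x0 + x10 + x01 + x2) = x01 ∧ p2 (x0 + x10 + x01 + x2) = x2
  -- multiplicative grading
  one_mem : (1 : A) ∈ A0
  mul00 : ∀ a ∈ A0, ∀ b ∈ A0, a * b ∈ A0
  mul0_10 : ∀ a ∈ A0, ∀ b ∈ A10, a * b ∈ A10 ∧ b * a ∈ A10
  mul0_01 : ∀ a ∈ A0, ∀ b ∈ A01, a * b ∈ A01 ∧ b * a ∈ A01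
  mul0_2 : ∀ a ∈ A0, ∀ b ∈ A2, a * b ∈ A2 ∧ b * a ∈ A2
  mul10_10 : ∀ a ∈ A10, ∀ b ∈ A10, a * b = 0
  mul10_01 : ∀ a ∈ A10, ∀ b ∈ A01, a * b ∈ A2 ∧ b * a ∈ A2
  mul01_01 : ∀ a ∈ A01, ∀ b ∈ A01, a * b ∈ A2
  mul1_2 : ∀ a : A, (a ∈ A10 ∨ a ∈ A01) → ∀ b ∈ A2, a * b = 0 ∧ b * a = 0
  mul2_2 : ∀ a ∈ A2, ∀ b ∈ A2, a * b = 0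
  -- the differential
  d0_mem : ∀ x ∈ A0, p10 (d x) + p01 (d x) = d x
  d10_mem : ∀ x ∈ A10, d x ∈ A2
  d01_mem : ∀ x ∈ A01, d x ∈ A2
  d2_zero : ∀ x ∈ A2, d x = 0
  d_sq : ∀ x : A, d (d x) = 0
  leibniz0 : ∀ a ∈ A0, ∀ b : A, d (a * b) = d a * b + a * d b
  leibniz1 : ∀ a : A, (a ∈ A10 ∨ a ∈ A01) → ∀ b : A, d (a * b) = d a * b - a * d b
  leibniz2 : ∀ a ∈ A2, ∀ b : A, d (a * b) = d a * b + a * d b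
  -- the curvature
  theta_mem : theta ∈ A2
  theta_central : ∀ a : A, theta * a = a * theta
  -- the ℂ-antilinear involution
  st_add : ∀ x y : A, st (x + y) = st x + st y
  st_smul : ∀ (c : ℂ) (x : A), st (c • x) = (starRingEnd ℂ c) • st x
  st_invol : ∀ x : A, st (st x) = x
  st_one : st 1 = 1
  st_mem0 : ∀ x ∈ A0, st x ∈ A0
  st_mem10 : ∀ x ∈ A10, st x ∈ A01
  st_mem01 : ∀ x ∈ A01, st x ∈ A10
  st_mem2 : ∀ x ∈ A2, st x ∈ A2
  st_mul0 : ∀ a ∈ A0, ∀ b : A, st (a * b) = st b * st a ∧ st (b * a) = st a * st b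
  st_mul1 : ∀ a b : A, (a ∈ A10 ∨ a ∈ A01) → (b ∈ A10 ∨ b ∈ A01) →
    st (a * b) = -(st b * st a)
  st_d : ∀ x : A, st (d x) = d (st x)
  st_theta : st theta = -theta
  -- the trace
  tau_zero0 : ∀ x ∈ A0, tau x = 0
  tau_zero10 : ∀ x ∈ A10, tau x = 0
  tau_zero01 : ∀ x ∈ A01, tau x = 0
  tau_comm0 : ∀ a ∈ A0, ∀ b : A, tau (a * b) = tau (b * a)
  tau_anticomm1 : ∀ a b : A, (a ∈ A10 ∨ a ∈ A01) → (b ∈ A10 ∨ b ∈ A01) →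
    tau (a * b) = -tau (b * a)
  tau_d : ∀ x : A, tau (d x) = 0
  tau_star : ∀ x ∈ A2, tau (st x) = starRingEnd ℂ (tau x)
  -- the Kähler element and the Lefschetz operators
  omega_mem : omega ∈ A2
  omega_st : st omega = omega
  omega_comm : ∀ a ∈ A0, omega * a = a * omega
  Lam_mem : ∀ x : A, Lam x ∈ A0
  Lam_zero0 : ∀ x ∈ A0, Lam x = 0
  Lam_zero10 : ∀ x ∈ A10, Lam x = 0
  Lam_zero01 : ∀ x ∈ A01, Lam x = 0
  Lam_left_inv : ∀ a ∈ A0, Lam (omega * a) = a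
  Lam_right_inv : ∀ b ∈ A2, omega * Lam b = b
  -- positive definiteness of the four Hermitian forms
  pos0 : ∀ a ∈ A0, a ≠ 0 →
    0 < (tau (omega * (st a * a))).re ∧ (tau (omega * (st a * a))).im = 0
  pos10 : ∀ a ∈ A10, a ≠ 0 →
    0 < (-Complex.I * tau (st a * a)).re ∧ (-Complex.I * tau (st a * a)).im = 0
  pos01 : ∀ a ∈ A01, a ≠ 0 →
    0 < (Complex.I * tau (st a * a)).re ∧ (Complex.I * tau (st a * a)).im = 0
  pos2 : ∀ a ∈ A2, a ≠ 0 →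
    0 < (tau (omega * (st (Lam a) * Lam a))).re ∧
      (tau (omega * (st (Lam a) * Lam a))).im = 0
  -- the Yang–Mills condition
  ym : d (Lam theta) = 0

namespace LozengeAlgebra

variable {A : Type*} [Ring A] [Algebra ℂ A] (Lz : LozengeAlgebra A)

/-- The operator `∂` (the `A^{1,0}`-component of `d` on `A⁰`, and `d` on `A^{0,1}`). -/
def del (x : A) : A := Lz.p10 (Lz.d (Lz.p0 x)) + Lz.d (Lz.p01 x)

/-- The operator `∂̄` (the `A^{0,1}`-component of `d` on `A⁰`, and `d` on `A^{1,0}`). -/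
def delbar (x : A) : A := Lz.p01 (Lz.d (Lz.p0 x)) + Lz.d (Lz.p10 x)

/-- The total inner product on `A = A⁰ ⊕ A^{1,0} ⊕ A^{0,1} ⊕ A²`, the orthogonal sum of
the Hermitian forms `τ(ω a* b)` on `A⁰`, `−iτ(a* b)` on `A^{1,0}`, `iτ(a* b)` on
`A^{0,1}`, and `τ(ω Λ(a)* Λ(b))` on `A²`. -/
noncomputable def innerL (u v : A) : ℂ :=
  Lz.tau (Lz.omega * (Lz.st (Lz.p0 u) * Lz.p0 v))
    + (-Complex.I) * Lz.tau (Lz.st (Lz.p10 u) * Lz.p10 v)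
    + Complex.I * Lz.tau (Lz.st (Lz.p01 u) * Lz.p01 v)
    + Lz.tau (Lz.omega * (Lz.st (Lz.Lam (Lz.p2 u)) * Lz.Lam (Lz.p2 v)))

end LozengeAlgebra


/-!
Positive definiteness makes adjoints unique, and integrating by parts against `τ` identifies
them: `∂* = iΛ∂̄` on `A^{1,0}` and `∂* = -i∂̄Λ` on `A²`, while `∂̄* = -iΛ∂` on `A^{0,1}` and
`∂̄* = i∂Λ` on `A²`. With these formulas the mixed terms `∂∂̄* + ∂̄*∂` and `∂̄∂* + ∂*∂̄` vanish,
which gives `Δ = Δ_∂ + Δ_∂̄`, and `Δ_∂ - Δ_∂̄ = i(Λd² - d²Λ) = 0`.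
-/

namespace LozengeAlgebra

variable {A : Type*} [Ring A] [Algebra ℂ A] (Lz : LozengeAlgebra A)

noncomputable def delAdjoint (v : A) : A :=
  Complex.I • Lz.Lam (Lz.d (Lz.p10 v)) + (-Complex.I) • Lz.p01 (Lz.d (Lz.Lam (Lz.p2 v)))

noncomputable def delbarAdjoint (v : A) : A :=
  (-Complex.I) • Lz.Lam (Lz.d (Lz.p01 v)) + Complex.I • Lz.p10 (Lz.d (Lz.Lam (Lz.p2 v)))

def IsAdjoint (T S : A → A) : Prop :=
  ∀ u v : A, Lz.innerL (T u) v = Lz.innerL u (S v)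

section Algebra

lemma st_zero : Lz.st 0 = 0 := by
  simpa using Lz.st_smul 0 0

lemma mul_eq_zero_of_mem_A01 {a b : A} (ha : a ∈ Lz.A01) (hb : b ∈ Lz.A01) : a * b = 0 := by
  have h : Lz.st (a * b) = 0 := by
    rw [Lz.st_mul1 a b (Or.inr ha) (Or.inr hb),
      Lz.mul10_10 _ (Lz.st_mem01 _ hb) _ (Lz.st_mem01 _ ha), neg_zero]
  simpa [Lz.st_invol, Lz.st_zero] using congrArg Lz.st h

lemma st_d_of_mem_A0 {a : A} (ha : a ∈ Lz.A0) :
    Lz.st (Lz.d a) = Lz.st (Lz.p10 (Lz.d a)) + Lz.st (Lz.p01 (Lz.d a)) := by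
  rw [← Lz.st_add, Lz.d0_mem _ ha]

lemma mul_d_eq_mul_p01_d {c a : A} (hc : c ∈ Lz.A10) (ha : a ∈ Lz.A0) :
    c * Lz.d a = c * Lz.p01 (Lz.d a) := by
  conv_lhs => rw [← Lz.d0_mem _ ha]
  rw [mul_add, Lz.mul10_10 _ hc _ (Lz.p10_mem _), zero_add]

lemma mul_d_eq_mul_p10_d {c a : A} (hc : c ∈ Lz.A01) (ha : a ∈ Lz.A0) :
    c * Lz.d a = c * Lz.p10 (Lz.d a) := by
  conv_lhs => rw [← Lz.d0_mem _ ha]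
  rw [mul_add, Lz.mul_eq_zero_of_mem_A01 hc (Lz.p01_mem _), add_zero]

lemma omega_mul_st_mul_Lam {a β : A} (ha : a ∈ Lz.A0) (hβ : β ∈ Lz.A2) :
    Lz.omega * (Lz.st a * Lz.Lam β) = Lz.st a * β := by
  rw [← mul_assoc, Lz.omega_comm _ (Lz.st_mem0 a ha), mul_assoc, Lz.Lam_right_inv _ hβ]

lemma omega_mul_st_Lam {β : A} (hβ : β ∈ Lz.A2) : Lz.omega * Lz.st (Lz.Lam β) = Lz.st β := by
  conv_rhs => rw [← Lz.Lam_right_inv _ hβ]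
  rw [(Lz.st_mul0 _ (Lz.Lam_mem β) Lz.omega).2, Lz.omega_st,
    Lz.omega_comm _ (Lz.st_mem0 _ (Lz.Lam_mem β))]

end Algebra

section IntegrationByParts

lemma tau_st_mul_d_of_mem_A0 {a : A} (ha : a ∈ Lz.A0) (c : A) :
    Lz.tau (Lz.st a * Lz.d c) = -Lz.tau (Lz.st (Lz.d a) * c) := by
  have h := Lz.tau_d (Lz.st a * c)
  rw [Lz.leibniz0 _ (Lz.st_mem0 a ha), map_add, ← Lz.st_d] at h
  linear_combination h

lemma tau_st_d_mul_of_mem_A1 {c : A} (hc : c ∈ Lz.A10 ∨ c ∈ Lz.A01) (f : A) :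
    Lz.tau (Lz.st (Lz.d c) * f) = Lz.tau (Lz.st c * Lz.d f) := by
  have hst : Lz.st c ∈ Lz.A10 ∨ Lz.st c ∈ Lz.A01 :=
    hc.symm.imp (Lz.st_mem01 c) (Lz.st_mem10 c)
  have h := Lz.tau_d (Lz.st c * f)
  rw [Lz.leibniz1 _ hst, map_sub, ← Lz.st_d] at h
  linear_combination h

lemma tau_st_mul_d_of_mem_A10 {a b : A} (ha : a ∈ Lz.A0) (hb : b ∈ Lz.A10) :
    Lz.tau (Lz.st a * Lz.d b) = -Lz.tau (Lz.st (Lz.p10 (Lz.d a)) * b) := by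
  rw [Lz.tau_st_mul_d_of_mem_A0 ha, Lz.st_d_of_mem_A0 ha, add_mul,
    Lz.mul10_10 _ (Lz.st_mem01 _ (Lz.p01_mem _)) _ hb, add_zero]

lemma tau_st_mul_d_of_mem_A01 {a c : A} (ha : a ∈ Lz.A0) (hc : c ∈ Lz.A01) :
    Lz.tau (Lz.st a * Lz.d c) = -Lz.tau (Lz.st (Lz.p01 (Lz.d a)) * c) := by
  rw [Lz.tau_st_mul_d_of_mem_A0 ha, Lz.st_d_of_mem_A0 ha, add_mul,
    Lz.mul_eq_zero_of_mem_A01 (Lz.st_mem10 _ (Lz.p10_mem _)) hc, zero_add]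

lemma tau_omega_st_Lam_d_mul_of_mem_A10 {b f : A} (hb : b ∈ Lz.A10) (hf : f ∈ Lz.A0) :
    Lz.tau (Lz.omega * (Lz.st (Lz.Lam (Lz.d b)) * f)) =
      Lz.tau (Lz.st b * Lz.p10 (Lz.d f)) := by
  rw [← mul_assoc, Lz.omega_mul_st_Lam (Lz.d10_mem b hb), Lz.tau_st_d_mul_of_mem_A1 (Or.inl hb),
    Lz.mul_d_eq_mul_p10_d (Lz.st_mem10 b hb) hf]

lemma tau_omega_st_Lam_d_mul_of_mem_A01 {c f : A} (hc : c ∈ Lz.A01) (hf : f ∈ Lz.A0) :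
    Lz.tau (Lz.omega * (Lz.st (Lz.Lam (Lz.d c)) * f)) =
      Lz.tau (Lz.st c * Lz.p01 (Lz.d f)) := by
  rw [← mul_assoc, Lz.omega_mul_st_Lam (Lz.d01_mem c hc), Lz.tau_st_d_mul_of_mem_A1 (Or.inr hc),
    Lz.mul_d_eq_mul_p01_d (Lz.st_mem01 c hc) hf]

end IntegrationByParts

section Components

lemma d_eq_del_add_delbar (x : A) : Lz.d x = Lz.del x + Lz.delbar x := by
  conv_lhs => rw [← Lz.decomp x]
  rw [map_add, map_add, map_add, Lz.d2_zero _ (Lz.p2_mem x), add_zero,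
    ← Lz.d0_mem _ (Lz.p0_mem x)]
  simp only [del, delbar]
  abel

lemma d_p10_d_add_d_p01_d {a : A} (ha : a ∈ Lz.A0) :
    Lz.d (Lz.p10 (Lz.d a)) + Lz.d (Lz.p01 (Lz.d a)) = 0 := by
  rw [← map_add, Lz.d0_mem _ ha, Lz.d_sq]

lemma del_add (x y : A) : Lz.del (x + y) = Lz.del x + Lz.del y := by
  simp only [del, map_add]
  abel

lemma delbar_add (x y : A) : Lz.delbar (x + y) = Lz.delbar x + Lz.delbar y := by
  simp only [delbar, map_add]
  abel

lemma delAdjoint_add (x y : A) :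
    Lz.delAdjoint (x + y) = Lz.delAdjoint x + Lz.delAdjoint y := by
  simp only [delAdjoint, map_add, smul_add]
  abel

lemma delbarAdjoint_add (x y : A) :
    Lz.delbarAdjoint (x + y) = Lz.delbarAdjoint x + Lz.delbarAdjoint y := by
  simp only [delbarAdjoint, map_add, smul_add]
  abel

lemma proj_del (u : A) :
    Lz.p0 (Lz.del u) = 0 ∧ Lz.p10 (Lz.del u) = Lz.p10 (Lz.d (Lz.p0 u)) ∧
    Lz.p01 (Lz.del u) = 0 ∧ Lz.p2 (Lz.del u) = Lz.d (Lz.p01 u) := by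
  simpa [del] using Lz.proj_eq 0 Lz.A0.zero_mem _ (Lz.p10_mem _) 0 Lz.A01.zero_mem _
    (Lz.d01_mem _ (Lz.p01_mem u))

lemma proj_delbar (u : A) :
    Lz.p0 (Lz.delbar u) = 0 ∧ Lz.p10 (Lz.delbar u) = 0 ∧
    Lz.p01 (Lz.delbar u) = Lz.p01 (Lz.d (Lz.p0 u)) ∧
    Lz.p2 (Lz.delbar u) = Lz.d (Lz.p10 u) := by
  simpa [delbar] using Lz.proj_eq 0 Lz.A0.zero_mem 0 Lz.A10.zero_mem _ (Lz.p01_mem _) _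
    (Lz.d10_mem _ (Lz.p10_mem u))

lemma proj_delAdjoint (v : A) :
    Lz.p0 (Lz.delAdjoint v) = Complex.I • Lz.Lam (Lz.d (Lz.p10 v)) ∧
    Lz.p10 (Lz.delAdjoint v) = 0 ∧
    Lz.p01 (Lz.delAdjoint v) = (-Complex.I) • Lz.p01 (Lz.d (Lz.Lam (Lz.p2 v))) ∧
    Lz.p2 (Lz.delAdjoint v) = 0 := by
  simpa [delAdjoint] using Lz.proj_eq _ (Lz.A0.smul_mem Complex.I (Lz.Lam_mem _)) 0
    Lz.A10.zero_mem _ (Lz.A01.smul_mem (-Complex.I) (Lz.p01_mem _)) 0 Lz.A2.zero_mem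

lemma proj_delbarAdjoint (v : A) :
    Lz.p0 (Lz.delbarAdjoint v) = (-Complex.I) • Lz.Lam (Lz.d (Lz.p01 v)) ∧
    Lz.p10 (Lz.delbarAdjoint v) = Complex.I • Lz.p10 (Lz.d (Lz.Lam (Lz.p2 v))) ∧
    Lz.p01 (Lz.delbarAdjoint v) = 0 ∧
    Lz.p2 (Lz.delbarAdjoint v) = 0 := by
  simpa [delbarAdjoint] using Lz.proj_eq _ (Lz.A0.smul_mem (-Complex.I) (Lz.Lam_mem _)) _
    (Lz.A10.smul_mem Complex.I (Lz.p10_mem _)) 0 Lz.A01.zero_mem 0 Lz.A2.zero_mem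

end Components

section InnerProduct

lemma innerL_add_left (u u' v : A) :
    Lz.innerL (u + u') v = Lz.innerL u v + Lz.innerL u' v := by
  simp only [innerL, map_add, Lz.st_add, add_mul, mul_add]
  ring

lemma innerL_add_right (u v v' : A) :
    Lz.innerL u (v + v') = Lz.innerL u v + Lz.innerL u v' := by
  simp only [innerL, map_add, mul_add]
  ring

lemma innerL_sub_right (u v v' : A) :
    Lz.innerL u (v - v') = Lz.innerL u v - Lz.innerL u v' := by
  simp only [innerL, map_sub, mul_sub]
  ring

lemma re_nonneg_of_pos {S : Submodule ℂ A} {f : A → ℂ} (hf : f 0 = 0)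
    (hpos : ∀ a ∈ S, a ≠ 0 → 0 < (f a).re ∧ (f a).im = 0) {a : A} (ha : a ∈ S) :
    0 ≤ (f a).re := by
  rcases eq_or_ne a 0 with rfl | h
  · simp [hf]
  · exact (hpos a ha h).1.le

lemma innerL_self_re_pos {w : A} (hw : w ≠ 0) : 0 < (Lz.innerL w w).re := by
  have h0 := re_nonneg_of_pos (by simp [Lz.st_zero]) Lz.pos0 (Lz.p0_mem w)
  have h10 := re_nonneg_of_pos (by simp [Lz.st_zero]) Lz.pos10 (Lz.p10_mem w)
  have h01 := re_nonneg_of_pos (by simp [Lz.st_zero]) Lz.pos01 (Lz.p01_mem w)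
  have h2 := re_nonneg_of_pos (by simp [Lz.st_zero]) Lz.pos2 (Lz.p2_mem w)
  have hcomp : Lz.p0 w ≠ 0 ∨ Lz.p10 w ≠ 0 ∨ Lz.p01 w ≠ 0 ∨ Lz.p2 w ≠ 0 := by
    contrapose! hw
    rw [← Lz.decomp w, hw.1, hw.2.1, hw.2.2.1, hw.2.2.2, add_zero, add_zero, add_zero]
  simp only [innerL, Complex.add_re]
  rcases hcomp with h | h | h | h
  · linarith [(Lz.pos0 _ (Lz.p0_mem w) h).1]
  · linarith [(Lz.pos10 _ (Lz.p10_mem w) h).1]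
  · linarith [(Lz.pos01 _ (Lz.p01_mem w) h).1]
  · linarith [(Lz.pos2 _ (Lz.p2_mem w) h).1]

lemma ext_innerL_left {w₁ w₂ : A} (h : ∀ u, Lz.innerL u w₁ = Lz.innerL u w₂) : w₁ = w₂ := by
  by_contra hne
  have hpos := Lz.innerL_self_re_pos (sub_ne_zero_of_ne hne)
  rw [Lz.innerL_sub_right, h, sub_self, Complex.zero_re] at hpos
  exact lt_irrefl 0 hpos

end InnerProduct

section Adjoints

variable {Lz}

lemma IsAdjoint.unique {T S₁ S₂ : A → A} (h₁ : Lz.IsAdjoint T S₁) (h₂ : Lz.IsAdjoint T S₂) :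
    S₁ = S₂ :=
  funext fun v => Lz.ext_innerL_left fun u => (h₁ u v).symm.trans (h₂ u v)

lemma IsAdjoint.add {T T' S S' : A → A} (h : Lz.IsAdjoint T S) (h' : Lz.IsAdjoint T' S') :
    Lz.IsAdjoint (T + T') (S + S') := fun u v => by
  simp only [Pi.add_apply, Lz.innerL_add_left, Lz.innerL_add_right, h u v, h' u v]

variable (Lz)

lemma isAdjoint_del : Lz.IsAdjoint Lz.del Lz.delAdjoint := fun u v => by
  obtain ⟨q0, q10, q01, q2⟩ := Lz.proj_del u
  obtain ⟨r0, r10, r01, r2⟩ := Lz.proj_delAdjoint v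
  simp only [innerL, q0, q10, q01, q2, r0, r10, r01, r2, Lz.st_zero, zero_mul, mul_zero,
    map_zero, map_smul, mul_smul_comm, smul_eq_mul]
  rw [Lz.omega_mul_st_mul_Lam (Lz.p0_mem u) (Lz.d10_mem _ (Lz.p10_mem v))]
  linear_combination (-Complex.I) * Lz.tau_st_mul_d_of_mem_A10 (Lz.p0_mem u) (Lz.p10_mem v)
    + Lz.tau_omega_st_Lam_d_mul_of_mem_A01 (Lz.p01_mem u) (Lz.Lam_mem _)
    + Lz.tau (Lz.st (Lz.p01 u) * Lz.p01 (Lz.d (Lz.Lam (Lz.p2 v)))) * Complex.I_sq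

lemma isAdjoint_delbar : Lz.IsAdjoint Lz.delbar Lz.delbarAdjoint := fun u v => by
  obtain ⟨q0, q10, q01, q2⟩ := Lz.proj_delbar u
  obtain ⟨r0, r10, r01, r2⟩ := Lz.proj_delbarAdjoint v
  simp only [innerL, q0, q10, q01, q2, r0, r10, r01, r2, Lz.st_zero, zero_mul, mul_zero,
    map_zero, map_smul, mul_smul_comm, smul_eq_mul]
  rw [Lz.omega_mul_st_mul_Lam (Lz.p0_mem u) (Lz.d01_mem _ (Lz.p01_mem v))]
  linear_combination Complex.I * Lz.tau_st_mul_d_of_mem_A01 (Lz.p0_mem u) (Lz.p01_mem v)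
    + Lz.tau_omega_st_Lam_d_mul_of_mem_A10 (Lz.p10_mem u) (Lz.Lam_mem _)
    + Lz.tau (Lz.st (Lz.p10 u) * Lz.p10 (Lz.d (Lz.Lam (Lz.p2 v)))) * Complex.I_sq

lemma isAdjoint_d : Lz.IsAdjoint Lz.d (Lz.delAdjoint + Lz.delbarAdjoint) := by
  have hd : ⇑Lz.d = Lz.del + Lz.delbar := funext Lz.d_eq_del_add_delbar
  rw [hd]
  exact Lz.isAdjoint_del.add Lz.isAdjoint_delbar

end Adjoints

section Laplacians

lemma del_delbarAdjoint_add_delbarAdjoint_del (x : A) :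
    Lz.del (Lz.delbarAdjoint x) + Lz.delbarAdjoint (Lz.del x) = 0 := by
  obtain ⟨-, -, q01, q2⟩ := Lz.proj_del x
  obtain ⟨r0, -, r01, -⟩ := Lz.proj_delbarAdjoint x
  rw [del, r0, r01, delbarAdjoint, q01, q2]
  simp only [map_zero, map_smul, smul_zero]
  module

lemma delbar_delAdjoint_add_delAdjoint_delbar (x : A) :
    Lz.delbar (Lz.delAdjoint x) + Lz.delAdjoint (Lz.delbar x) = 0 := by
  obtain ⟨-, q10, -, q2⟩ := Lz.proj_delbar x
  obtain ⟨r0, r10, -, -⟩ := Lz.proj_delAdjoint x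
  rw [delbar, r0, r10, delAdjoint, q10, q2]
  simp only [map_zero, map_smul, smul_zero]
  module

lemma laplacian_d_eq (x : A) :
    Lz.d ((Lz.delAdjoint + Lz.delbarAdjoint) x) + (Lz.delAdjoint + Lz.delbarAdjoint) (Lz.d x) =
      (Lz.del (Lz.delAdjoint x) + Lz.delAdjoint (Lz.del x)) +
        (Lz.delbar (Lz.delbarAdjoint x) + Lz.delbarAdjoint (Lz.delbar x)) := by
  simp only [Pi.add_apply, Lz.d_eq_del_add_delbar, Lz.del_add, Lz.delbar_add,
    Lz.delAdjoint_add, Lz.delbarAdjoint_add]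
  linear_combination (norm := module) Lz.del_delbarAdjoint_add_delbarAdjoint_del x +
    Lz.delbar_delAdjoint_add_delAdjoint_delbar x

lemma laplacian_del_eq_laplacian_delbar (x : A) :
    Lz.del (Lz.delAdjoint x) + Lz.delAdjoint (Lz.del x) =
      Lz.delbar (Lz.delbarAdjoint x) + Lz.delbarAdjoint (Lz.delbar x) := by
  obtain ⟨-, q10, -, q2⟩ := Lz.proj_del x
  obtain ⟨r0, -, r01, -⟩ := Lz.proj_delAdjoint x
  obtain ⟨-, -, s01, s2⟩ := Lz.proj_delbar x
  obtain ⟨t0, t10, -, -⟩ := Lz.proj_delbarAdjoint x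
  rw [del, r0, r01, delAdjoint, q10, q2, delbar, t0, t10, delbarAdjoint, s01, s2]
  simp only [map_smul]
  have h0 := Lz.d_p10_d_add_d_p01_d (Lz.p0_mem x)
  have h2 := Lz.d_p10_d_add_d_p01_d (Lz.Lam_mem (Lz.p2 x))
  rw [eq_neg_of_add_eq_zero_left h0, eq_neg_of_add_eq_zero_right h2, map_neg]
  module

end Laplacians

end LozengeAlgebra

open LozengeAlgebra in
theorem lozenge_laplacian_identities_general
    (A : Type*) [Ring A] [Algebra ℂ A]
    (Lz : LozengeAlgebra A)
    (dS delS delbarS : A → A)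
    (hdS : ∀ u v : A, Lz.innerL (Lz.d u) v = Lz.innerL u (dS v))
    (hdelS : ∀ u v : A, Lz.innerL (Lz.del u) v = Lz.innerL u (delS v))
    (hdelbarS : ∀ u v : A, Lz.innerL (Lz.delbar u) v = Lz.innerL u (delbarS v)) :
    (∀ x : A, Lz.d (dS x) + dS (Lz.d x) =
      (Lz.del (delS x) + delS (Lz.del x)) + (Lz.delbar (delbarS x) + delbarS (Lz.delbar x))) ∧
    (∀ x : A, Lz.del (delS x) + delS (Lz.del x) =
      Lz.delbar (delbarS x) + delbarS (Lz.delbar x)) ∧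
    (∀ x : A, Lz.d (dS x) + dS (Lz.d x) =
      (2 : ℂ) • (Lz.del (delS x) + delS (Lz.del x))) ∧
    (∀ x : A, Lz.d (dS x) + dS (Lz.d x) =
      (2 : ℂ) • (Lz.delbar (delbarS x) + delbarS (Lz.delbar x))) := by
  obtain rfl : dS = Lz.delAdjoint + Lz.delbarAdjoint := IsAdjoint.unique hdS Lz.isAdjoint_d
  obtain rfl : delS = Lz.delAdjoint := IsAdjoint.unique hdelS Lz.isAdjoint_del
  obtain rfl : delbarS = Lz.delbarAdjoint := IsAdjoint.unique hdelbarS Lz.isAdjoint_delbar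
  have hsum := Lz.laplacian_d_eq
  have heq := Lz.laplacian_del_eq_laplacian_delbar
  refine ⟨hsum, heq, fun x => ?_, fun x => ?_⟩
  · rw [hsum, heq, two_smul]
  · rw [hsum, heq, two_smul]

open LozengeAlgebra in
/-- in a finite-dimensional lozenge algebra, for the Laplacians
`Δ = dd* + d*d`, `Δ_∂ = ∂∂* + ∂*∂`, `Δ_∂̄ = ∂̄∂̄* + ∂̄*∂̄` (where `dS`, `delS`,
`delbarS` are the adjoints of `d`, `∂`, `∂̄` with respect to the inner products) one has
`Δ = Δ_∂ + Δ_∂̄` and `Δ_∂ = Δ_∂̄`; consequently `Δ = 2Δ_∂ = 2Δ_∂̄`. -/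
theorem lozenge_laplacian_identities
    (A : Type*) [Ring A] [Algebra ℂ A] [FiniteDimensional ℂ A]
    (Lz : LozengeAlgebra A)
    (dS delS delbarS : A → A)
    (hdS : ∀ u v : A, Lz.innerL (Lz.d u) v = Lz.innerL u (dS v))
    (hdelS : ∀ u v : A, Lz.innerL (Lz.del u) v = Lz.innerL u (delS v))
    (hdelbarS : ∀ u v : A, Lz.innerL (Lz.delbar u) v = Lz.innerL u (delbarS v)) :
    (∀ x : A, Lz.d (dS x) + dS (Lz.d x) =
      (Lz.del (delS x) + delS (Lz.del x)) + (Lz.delbar (delbarS x) + delbarS (Lz.delbar x))) ∧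
    (∀ x : A, Lz.del (delS x) + delS (Lz.del x) =
      Lz.delbar (delbarS x) + delbarS (Lz.delbar x)) ∧
    (∀ x : A, Lz.d (dS x) + dS (Lz.d x) =
      (2 : ℂ) • (Lz.del (delS x) + delS (Lz.del x))) ∧
    (∀ x : A, Lz.d (dS x) + dS (Lz.d x) =
      (2 : ℂ) • (Lz.delbar (delbarS x) + delbarS (Lz.delbar x))) :=
  lozenge_laplacian_identities_general A Lz dS delS delbarS hdS hdelS hdelbarS
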